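/- arXiv:2503.10910 — 6 statements merged into one kernel-verified Lean document; each statement's English description precedes it below -/
import Mathlib

section
/- Let v : 2^N → ℝ, p a price vector, and W* a set maximizing v(Q) - Σ_{i∈Q} p_i. If p' satisfies p'_i ≤ p_i for i ∈ W* and p'_i ≥ p_i for i ∉ W*, then every set T maximizing v(Q) - Σ_{i∈Q} p'_i also maximizes v(Q) - Σ_{i∈Q} p_i; that is, the demand set at p' is contained in the demand set at p. -/
/-!
Utility at prices `p` is utility at `p'` plus `∑_{i ∈ Q} (p' i - p i)`. This price change is
nonpositive on `W` and nonnegative off `W`, so its sum is smallest over `W`; passing from `p'`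
back to `p` therefore raises the utility of any `T` by at least as much as that of `W`, and
`W` is already optimal at `p`.
-/

open Finset

theorem Finset.sum_le_sum_of_nonpos_of_nonneg_compl {ι M : Type*} [AddCommMonoid M]
    [Preorder M] [AddLeftMono M] {f : ι → M} {s : Finset ι}
    (hs : ∀ i ∈ s, f i ≤ 0) (hsc : ∀ i, i ∉ s → 0 ≤ f i) (t : Finset ι) :
    ∑ i ∈ s, f i ≤ ∑ i ∈ t, f i := by
  classical
  calc ∑ i ∈ s, f i ≤ ∑ i ∈ s ∩ t, f i :=
        sum_le_sum_of_subset_of_nonpos' inter_subset_left fun i hi _ => hs i hi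
    _ ≤ ∑ i ∈ t, f i :=
        sum_le_sum_of_subset_of_nonneg inter_subset_right fun i _ hi =>
          hsc i fun his => hi (mem_inter.2 ⟨his, ‹_›⟩)

theorem demand_set_subset_general {N : Type*}
    (v : Finset N → ℝ) (p p' : N → ℝ) (W : Finset N)
    (hW : ∀ Q : Finset N, v Q - ∑ i ∈ Q, p i ≤ v W - ∑ i ∈ W, p i)
    (hwin : ∀ i ∈ W, p' i ≤ p i)
    (hlose : ∀ i, i ∉ W → p i ≤ p' i) :
    ∀ T : Finset N,
      (∀ Q : Finset N, v Q - ∑ i ∈ Q, p' i ≤ v T - ∑ i ∈ T, p' i) →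
      (∀ Q : Finset N, v Q - ∑ i ∈ Q, p i ≤ v T - ∑ i ∈ T, p i) := by
  intro T hT Q
  have hshift (S : Finset N) :
      v S - ∑ i ∈ S, p i = v S - ∑ i ∈ S, p' i + ∑ i ∈ S, (p' i - p i) := by
    rw [sum_sub_distrib]; ring
  have hmin : ∑ i ∈ W, (p' i - p i) ≤ ∑ i ∈ T, (p' i - p i) :=
    sum_le_sum_of_nonpos_of_nonneg_compl (fun i hi => sub_nonpos.2 (hwin i hi))
      (fun i hi => sub_nonneg.2 (hlose i hi)) T
  calc v Q - ∑ i ∈ Q, p i ≤ v W - ∑ i ∈ W, p i := hW Q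
    _ = v W - ∑ i ∈ W, p' i + ∑ i ∈ W, (p' i - p i) := hshift W
    _ ≤ v T - ∑ i ∈ T, p' i + ∑ i ∈ T, (p' i - p i) := add_le_add (hT W) hmin
    _ = v T - ∑ i ∈ T, p i := (hshift T).symm

/-- If `W` maximizes the buyer's utility at prices `p`, and `p'` weakly lowers the
prices of winners and weakly raises the prices of losers, then every maximizer at `p'`
is also a maximizer at `p`, i.e. `D(v;p') ⊆ D(v;p)`. -/
theorem demand_set_subset {N : Type*} [Fintype N] [DecidableEq N]
    (v : Finset N → ℝ) (p p' : N → ℝ) (W : Finset N)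
    (hW : ∀ Q : Finset N, v Q - ∑ i ∈ Q, p i ≤ v W - ∑ i ∈ W, p i)
    (hwin : ∀ i ∈ W, p' i ≤ p i)
    (hlose : ∀ i, i ∉ W → p i ≤ p' i) :
    ∀ T : Finset N,
      (∀ Q : Finset N, v Q - ∑ i ∈ Q, p' i ≤ v T - ∑ i ∈ T, p' i) →
      (∀ Q : Finset N, v Q - ∑ i ∈ Q, p i ≤ v T - ∑ i ∈ T, p i) :=
  demand_set_subset_general v p p' W hW hwin hlose
end

section
/- In the chopstick instance (two chopstick sellers with cost 10, one fork seller with cost 50, buyer value 100 for the fork or for both chopsticks, 0 otherwise), the bid profile where both chopstick sellers bid 95 and the fork seller bids 100 is a pure Nash equilibrium of the simultaneous first-price procurement game (the buyer buys a utility-maximizing set at the bid prices, tie-breaking in favor of the fork), yet the resulting allocation (buying the fork) is not welfare-maximizing. -/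
/-!
At the bids (95, 95, 100) every set leaves the buyer surplus at most 0, attained by the fork, so
the tie-break makes her buy the fork alone. A seller who wins must leave the buyer a nonnegative
surplus, so her bid is at most the value of the winning set minus the other winners' bids.
Against these bids a chopstick seller can therefore win only at a price of at most 100 - 95 = 5,
below her cost 10, and the fork seller only at a price of at most 100, which she already gets.
Yet the fork yields welfare 100 - 50, while the two chopsticks would yield 100 - 20.
-/

open Finset Function

section Procurement

variable {ι : Type*} [DecidableEq ι] {v : Finset ι → ℝ} {b : ι → ℝ} {W : Finset ι}
  {i : ι}

def IsSurplusMax (v : Finset ι → ℝ) (b : ι → ℝ) (W : Finset ι) : Prop :=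
  ∀ Q : Finset ι, v Q - ∑ j ∈ Q, b j ≤ v W - ∑ j ∈ W, b j

theorem IsSurplusMax.bid_le (hW : IsSurplusMax v b W) (hv : v ∅ = 0) (hi : i ∈ W) :
    b i ≤ v W - ∑ j ∈ W.erase i, b j := by
  have hnonneg := hW ∅
  rw [hv, sum_empty, ← add_sum_erase W b hi] at hnonneg
  linarith

theorem IsSurplusMax.update_bid_le {x : ℝ} (hW : IsSurplusMax v (update b i x) W)
    (hv : v ∅ = 0) (hi : i ∈ W) : x ≤ v W - ∑ j ∈ W.erase i, b j := by
  have hothers : ∑ j ∈ W.erase i, update b i x j = ∑ j ∈ W.erase i, b j :=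
    sum_congr rfl fun j hj => update_of_ne (ne_of_mem_erase hj) x b
  simpa [hothers] using hW.bid_le hv hi

theorem IsSurplusMax.profit_le {x c p : ℝ} (hW : IsSurplusMax v (update b i x) W)
    (hv : v ∅ = 0) (hcap : ∀ Q, i ∈ Q → v Q - ∑ j ∈ Q.erase i, b j ≤ p) :
    (if i ∈ W then x - c else 0) ≤ max (p - c) 0 := by
  split_ifs with hi
  · exact le_max_of_le_left (by linarith [hW.update_bid_le hv hi, hcap W hi])
  · exact le_max_right _ _

theorem IsSurplusMax.eq_singleton (hW : IsSurplusMax v b W) (hv : v ∅ = 0)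
    (hvle : ∀ Q, v Q ≤ b i) (hpos : ∀ j ≠ i, 0 < b j) (hi : i ∈ W) : W = {i} := by
  have hothers : ∑ j ∈ W.erase i, b j ≤ 0 := by linarith [hW.bid_le hv hi, hvle W]
  have hempty : W.erase i = ∅ := by
    by_contra hne
    exact (sum_pos (fun j hj => hpos j (ne_of_mem_erase hj))
      (nonempty_iff_ne_empty.mpr hne)).not_ge hothers
  rw [← insert_erase hi, hempty]
  rfl

end Procurement

def chopstickValue (Q : Finset (Fin 3)) : ℝ :=
  if (2 : Fin 3) ∈ Q ∨ ({0, 1} : Finset (Fin 3)) ⊆ Q then 100 else 0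

theorem chopstickValue_le (Q : Finset (Fin 3)) : chopstickValue Q ≤ 100 := by
  unfold chopstickValue
  split_ifs <;> norm_num

theorem chopstickValue_sub_sum_nonpos (Q : Finset (Fin 3)) :
    chopstickValue Q - ∑ j ∈ Q, ![95, 95, 100] j ≤ 0 := by
  fin_cases Q <;> simp +decide [chopstickValue] <;> norm_num

theorem chopstickValue_sub_sum_erase_le (i : Fin 3) (Q : Finset (Fin 3)) (hi : i ∈ Q) :
    chopstickValue Q - ∑ j ∈ Q.erase i, ![95, 95, 100] j ≤ ![5, 5, 100] i := by
  fin_cases i <;> fin_cases Q <;> simp_all +decide [chopstickValue] <;> norm_num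

/-- In the chopstick instance, the bid profile (95, 95, 100) is a pure Nash
equilibrium of the simultaneous first-price procurement game (for any buyer
choice rule that maximizes utility and tie-breaks in favor of sets containing the
fork), the buyer buys the fork, yet the resulting allocation is not
welfare-maximizing. -/
theorem chopstick_bad_equilibrium
    (choose : (Fin 3 → ℝ) → Finset (Fin 3))
    (cost : Fin 3 → ℝ) (hcost : cost = ![10, 10, 50])
    (v : Finset (Fin 3) → ℝ)
    (hv : v = fun Q =>
      if (2 : Fin 3) ∈ Q ∨ ({0, 1} : Finset (Fin 3)) ⊆ Q then 100 else 0)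
    -- the buyer always picks a utility-maximizing set at the bid prices
    (hmax : ∀ b : Fin 3 → ℝ, ∀ Q : Finset (Fin 3),
      v Q - ∑ i ∈ Q, b i ≤ v (choose b) - ∑ i ∈ choose b, b i)
    -- tie-breaking in favor of the fork: if some maximizing set contains the fork,
    -- the chosen set contains the fork
    (htie : ∀ b : Fin 3 → ℝ, ∀ Q : Finset (Fin 3), (2 : Fin 3) ∈ Q →
      (∀ R : Finset (Fin 3), v R - ∑ i ∈ R, b i ≤ v Q - ∑ i ∈ Q, b i) →
      (2 : Fin 3) ∈ choose b)
    -- seller utilities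
    (util : Fin 3 → (Fin 3 → ℝ) → ℝ)
    (hutil : util = fun i b => if i ∈ choose b then b i - cost i else 0) :
    let b0 : Fin 3 → ℝ := ![95, 95, 100]
    -- (1) Nash equilibrium: no unilateral deviation strictly helps
    (∀ i : Fin 3, ∀ bi : ℝ, util i (Function.update b0 i bi) ≤ util i b0) ∧
    -- (2) the buyer buys the fork
    choose b0 = {2} ∧
    -- (3) but this allocation is not welfare-maximizing
    ¬ (∀ Q : Finset (Fin 3),
        v Q - ∑ i ∈ Q, cost i ≤ v (choose b0) - ∑ i ∈ choose b0, cost i) := by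
  intro b0
  obtain rfl : v = chopstickValue := hv
  subst hcost hutil
  have hv0 : chopstickValue ∅ = 0 := by simp [chopstickValue]
  have hfork : 2 ∈ choose b0 :=
    htie b0 {2} (mem_singleton_self 2) fun R =>
      (chopstickValue_sub_sum_nonpos R).trans_eq
        (by norm_num [chopstickValue, b0, Matrix.cons_val_two])
  have hchoose : choose b0 = {2} :=
    IsSurplusMax.eq_singleton (hmax b0) hv0 chopstickValue_le
      (fun j hj => by fin_cases j <;> simp_all [b0]) hfork
  refine ⟨fun i x => ?_, hchoose, fun hopt => ?_⟩
  · calc (if i ∈ choose (update b0 i x) then update b0 i x i - ![10, 10, 50] i else 0)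
        ≤ max (![5, 5, 100] i - ![10, 10, 50] i) 0 := by
          simpa using IsSurplusMax.profit_le (hmax (update b0 i x)) hv0
            (chopstickValue_sub_sum_erase_le i)
      _ ≤ if i ∈ choose b0 then b0 i - ![10, 10, 50] i else 0 := by
          rw [hchoose]; fin_cases i <;> simp [b0] <;> norm_num
  · have hchopsticks := hopt {0, 1}
    rw [hchoose] at hchopsticks
    norm_num [chopstickValue, sum_insert, Matrix.cons_val_two] at hchopsticks
end

section
/- In the instance with n sellers of cost 0 and anonymous valuation v(Q) = |Q| for |Q| ≤ n-2, v(Q) = n-2 for |Q| = n-1, v(Q) = n-1 for |Q| = n: at the price vector where every seller's price is 1/2, the set of all sellers maximizes the buyer's utility v(Q) - Σ_{i∈Q} p_i, yielding buyer utility n/2 - 1. -/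
theorem min_sub_half_le_half (a b : ℝ) : min a b - a / 2 ≤ b / 2 := by
  rcases min_cases a b with ⟨h, _⟩ | ⟨h, _⟩ <;> rw [h] <;> linarith

theorem all_sellers_demanded_at_half_general (n : ℕ) :
    let v : Finset (Fin n) → ℝ := fun Q =>
      if Q.card = n then (n : ℝ) - 1 else min (Q.card : ℝ) ((n : ℝ) - 2)
    let p : Fin n → ℝ := fun _ => 1 / 2
    (∀ Q : Finset (Fin n),
        v Q - ∑ i ∈ Q, p i ≤ v Finset.univ - ∑ i ∈ Finset.univ, p i) ∧
      v Finset.univ - ∑ i ∈ (Finset.univ : Finset (Fin n)), p i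
        = (n : ℝ) / 2 - 1 := by
  intro v p
  have price_sum : ∀ Q : Finset (Fin n), ∑ i ∈ Q, p i = (Q.card : ℝ) / 2 := by
    simp [p, div_eq_mul_inv]
  have utility_univ : v Finset.univ - ∑ i ∈ (Finset.univ : Finset (Fin n)), p i
      = (n : ℝ) / 2 - 1 := by
    simp only [v, price_sum, Finset.card_univ, Fintype.card_fin, if_true]
    ring
  refine ⟨fun Q => ?_, utility_univ⟩
  rw [utility_univ, price_sum]
  by_cases hQ : Q.card = n
  · simp only [v, if_pos hQ, hQ]
    linarith
  · simp only [v, if_neg hQ]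
    linarith [min_sub_half_le_half (Q.card : ℝ) ((n : ℝ) - 2)]

/-- In the same instance, at uniform prices `1/2`, the set of all sellers
maximizes the buyer's utility `v(Q) - |Q|/2`, yielding buyer utility `n/2 - 1`. -/
theorem all_sellers_demanded_at_half (n : ℕ) (hn : 3 ≤ n) :
    let v : Finset (Fin n) → ℝ := fun Q =>
      if Q.card = n then (n : ℝ) - 1 else min (Q.card : ℝ) ((n : ℝ) - 2)
    let p : Fin n → ℝ := fun _ => 1 / 2
    (∀ Q : Finset (Fin n),
        v Q - ∑ i ∈ Q, p i ≤ v Finset.univ - ∑ i ∈ Finset.univ, p i) ∧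
      v Finset.univ - ∑ i ∈ (Finset.univ : Finset (Fin n)), p i
        = (n : ℝ) / 2 - 1 :=
  all_sellers_demanded_at_half_general n
end

section
/- In the instance with n sellers of cost 0 and anonymous valuation v(Q) = |Q| for |Q| ≤ n-2, v(Q) = n-2 for |Q| = n-1, v(Q) = n-1 for |Q| = n: at the price vector where one seller has price 1 and all others have price 0, the set of all sellers maximizes the buyer's utility, giving total buyer payment 1. Hence two price vectors supporting the same efficient allocation can differ in total cost by a factor of n/2. -/
theorem utility_le_utility_univ {ι : Type*} [Fintype ι] (v : Finset ι → ℝ) (p : ι → ℝ)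
    (hp : ∀ i, 0 ≤ p i) (hv : ∀ Q ≠ Finset.univ, v Q ≤ v Finset.univ - ∑ i, p i)
    (Q : Finset ι) : v Q - ∑ i ∈ Q, p i ≤ v Finset.univ - ∑ i, p i := by
  obtain rfl | hQ := eq_or_ne Q Finset.univ
  · rfl
  · have := Finset.sum_nonneg fun i (_ : i ∈ Q) => hp i
    linarith [hv Q hQ]

theorem all_sellers_demanded_at_one_general (n : ℕ) (j : Fin n) :
    let v : Finset (Fin n) → ℝ := fun Q =>
      if Q.card = n then (n : ℝ) - 1 else min (Q.card : ℝ) ((n : ℝ) - 2)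
    let p : Fin n → ℝ := fun i => if i = j then 1 else 0
    (∀ Q : Finset (Fin n),
        v Q - ∑ i ∈ Q, p i ≤ v Finset.univ - ∑ i ∈ Finset.univ, p i) ∧
      ∑ i ∈ (Finset.univ : Finset (Fin n)), p i = 1 ∧
      ∑ i ∈ (Finset.univ : Finset (Fin n)), (1 / 2 : ℝ) = (n : ℝ) / 2 := by
  intro v p
  have hp_total : ∑ i, p i = 1 := by simp [p]
  have hv_univ : v Finset.univ = (n : ℝ) - 1 := by simp [v]
  have hv_proper (Q : Finset (Fin n)) (hQ : Q ≠ Finset.univ) : v Q ≤ (n : ℝ) - 2 := by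
    have hcard : Q.card ≠ n := by
      simpa using Q.card_eq_iff_eq_univ.not.mpr hQ
    simp [v, hcard]
  refine ⟨utility_le_utility_univ v p (fun i => ?_) (fun Q hQ => ?_), hp_total, ?_⟩
  · unfold p; split_ifs <;> norm_num
  · linarith [hv_proper Q hQ]
  · simp [div_eq_mul_inv]

/-- In the same instance, at the price vector where one seller has price 1 and all
others have price 0, the set of all sellers maximizes the buyer's utility and the
buyer's total payment is 1 (whereas at uniform prices 1/2 it is n/2): two price
vectors supporting the same efficient allocation whose total costs differ by a
factor of n/2. -/
theorem all_sellers_demanded_at_one (n : ℕ) (hn : 3 ≤ n) (j : Fin n) :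
    let v : Finset (Fin n) → ℝ := fun Q =>
      if Q.card = n then (n : ℝ) - 1 else min (Q.card : ℝ) ((n : ℝ) - 2)
    let p : Fin n → ℝ := fun i => if i = j then 1 else 0
    (∀ Q : Finset (Fin n),
        v Q - ∑ i ∈ Q, p i ≤ v Finset.univ - ∑ i ∈ Finset.univ, p i) ∧
      ∑ i ∈ (Finset.univ : Finset (Fin n)), p i = 1 ∧
      ∑ i ∈ (Finset.univ : Finset (Fin n)), (1 / 2 : ℝ) = (n : ℝ) / 2 :=
  all_sellers_demanded_at_one_general n j
end

section
/- Suppose v(Q) = g(|Q|) with g concave (decreasing marginals) and sellers ordered by cost c_1 ≤ ... ≤ c_n, and let k be the largest index with g(k) - g(k-1) ≥ c_k. If each of the first k sellers is paid the price p = g(k+1) - g(k) (with g(n+1) - g(n) interpreted appropriately if k = n), then the set {1,...,k} maximizes the buyer's utility v(Q) - Σ_{i∈Q} p_i when all sellers i ≤ k have price g(k+1) - g(k) and all sellers i > k have price c_i, provided g(k+1) - g(k) < c_{k+1}. -/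
/-!
With concave `g`, the buyer's utility `g m - m * (g (k + 1) - g k)` from buying `m` sellers at
the uniform price `g (k + 1) - g k` is maximised at `m = k`: marginals before `k` exceed the
price, later ones fall short of it. Every actual price is at least this uniform price (sellers
beyond `k` cost at least `c_{k+1}`), so no set `Q` does better than its cardinality would at the
uniform price, while the prefix `{1, …, k}` pays exactly the uniform price.
-/

open Finset

section Marginal

variable {g : ℕ → ℝ}

theorem sub_le_mul_marginal_of_le (hd : Antitone fun m => g (m + 1) - g m)
    {k m : ℕ} (hkm : k ≤ m) :
    g m - g k ≤ ((m : ℝ) - k) * (g (k + 1) - g k) := by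
  rw [← sum_Ico_sub g hkm, ← Nat.cast_sub hkm, ← Nat.card_Ico, ← nsmul_eq_mul]
  exact sum_le_card_nsmul _ _ _ fun i hi => hd (mem_Ico.mp hi).1

theorem mul_marginal_le_sub_of_le (hd : Antitone fun m => g (m + 1) - g m)
    {k m : ℕ} (hmk : m ≤ k) :
    ((k : ℝ) - m) * (g (k + 1) - g k) ≤ g k - g m := by
  rw [← sum_Ico_sub g hmk, ← Nat.cast_sub hmk, ← Nat.card_Ico, ← nsmul_eq_mul]
  exact card_nsmul_le_sum _ _ _ fun i hi => hd (mem_Ico.mp hi).2.le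

theorem sub_mul_marginal_le_of_antitone (hd : Antitone fun m => g (m + 1) - g m) (k m : ℕ) :
    g m - m * (g (k + 1) - g k) ≤ g k - k * (g (k + 1) - g k) := by
  rcases le_total k m with hkm | hmk
  · linarith [sub_le_mul_marginal_of_le hd hkm]
  · linarith [mul_marginal_le_sub_of_le hd hmk]

end Marginal

theorem concave_threshold_prices_general (n : ℕ) (g : ℕ → ℝ) (c : Fin n → ℝ)
    (hconc : ∀ m : ℕ, g (m + 2) - g (m + 1) ≤ g (m + 1) - g m)
    (hsorted : ∀ i j : Fin n, i ≤ j → c i ≤ c j)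
    (k : ℕ) (hkn : k < n)
    (hstrict : g (k + 1) - g k < c ⟨k, hkn⟩) :
    let p : Fin n → ℝ := fun i => if (i : ℕ) < k then g (k + 1) - g k else c i
    let W : Finset (Fin n) := Finset.univ.filter (fun i => (i : ℕ) < k)
    ∀ Q : Finset (Fin n),
      g Q.card - ∑ i ∈ Q, p i ≤ g W.card - ∑ i ∈ W, p i := by
  intro p W Q
  have hprice : ∀ i, g (k + 1) - g k ≤ p i := by
    intro i
    by_cases hik : (i : ℕ) < k
    · simp only [p, if_pos hik, le_refl]
    · simp only [p, if_neg hik]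
      exact hstrict.le.trans (hsorted _ _ (Fin.le_def.mpr (not_lt.mp hik)))
  have hWcard : W.card = k := by simp [W, Fin.card_filter_val_lt, hkn.le]
  have hWsum : ∑ i ∈ W, p i = k * (g (k + 1) - g k) := by
    rw [sum_congr rfl fun i hi => if_pos (mem_filter.mp hi).2, sum_const, hWcard, nsmul_eq_mul]
  calc g Q.card - ∑ i ∈ Q, p i ≤ g Q.card - Q.card * (g (k + 1) - g k) := by
        rw [← nsmul_eq_mul]
        gcongr
        exact card_nsmul_le_sum _ _ _ fun i _ => hprice i
    _ ≤ g k - k * (g (k + 1) - g k) :=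
        sub_mul_marginal_le_of_antitone (antitone_nat_of_succ_le hconc) k Q.card
    _ = g W.card - ∑ i ∈ W, p i := by rw [hWsum, hWcard]

/-- With a concave anonymous valuation and sorted costs, if the first `k` sellers
are each priced at `g(k+1) - g(k)` and all other sellers are priced at their
costs (and `g(k+1) - g(k) < c_{k+1}`), then the prefix `{1,…,k}` maximizes the
buyer's utility at these prices. -/
theorem concave_threshold_prices (n : ℕ) (g : ℕ → ℝ) (c : Fin n → ℝ)
    (hg0 : g 0 = 0)
    (hconc : ∀ m : ℕ, g (m + 2) - g (m + 1) ≤ g (m + 1) - g m)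
    (hsorted : ∀ i j : Fin n, i ≤ j → c i ≤ c j)
    (k : ℕ) (hkn : k < n)
    (hin : ∀ i : Fin n, (i : ℕ) < k → c i ≤ g ((i : ℕ) + 1) - g (i : ℕ))
    (hout : ∀ i : Fin n, k ≤ (i : ℕ) → g ((i : ℕ) + 1) - g (i : ℕ) < c i)
    (hstrict : g (k + 1) - g k < c ⟨k, hkn⟩) :
    let p : Fin n → ℝ := fun i => if (i : ℕ) < k then g (k + 1) - g k else c i
    let W : Finset (Fin n) := Finset.univ.filter (fun i => (i : ℕ) < k)
    ∀ Q : Finset (Fin n),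
      g Q.card - ∑ i ∈ Q, p i ≤ g W.card - ∑ i ∈ W, p i :=
  concave_threshold_prices_general n g c hconc hsorted k hkn hstrict
end

section
/- Let v be any valuation and c the cost vector. If W maximizes v(Q) - Σ_{i∈Q} p_i at a price vector p with p_i ≥ c_i for all i ∈ W and p_i ≤ c_i for all i ∉ W, then W maximizes social welfare v(Q) - Σ_{i∈Q} c_i over all Q ⊆ N. -/
/-!
Summing `p i - c i` over `Q`, the losers in `Q` contribute at most `0` and the winners
missing from `Q` at least `0`, so this sum is largest at `Q = W`. Hence passing from
prices to true costs raises the payoff of `W` at least as much as that of any other `Q`.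
-/

namespace Finset

theorem sum_le_sum_of_nonneg_of_nonpos_compl {ι M : Type*} [AddCommMonoid M] [PartialOrder M]
    [IsOrderedAddMonoid M] {f : ι → M} {s : Finset ι}
    (hs : ∀ i ∈ s, 0 ≤ f i) (hsc : ∀ i ∉ s, f i ≤ 0) (t : Finset ι) :
    ∑ i ∈ t, f i ≤ ∑ i ∈ s, f i := by
  classical
  calc ∑ i ∈ t, f i = ∑ i ∈ t ∩ s, f i + ∑ i ∈ t \ s, f i :=
        (sum_inter_add_sum_sdiff t s f).symm
    _ ≤ ∑ i ∈ t ∩ s, f i :=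
        add_le_of_le_of_nonpos le_rfl (sum_nonpos fun i hi ↦ hsc i (mem_sdiff.1 hi).2)
    _ ≤ ∑ i ∈ s, f i :=
        sum_le_sum_of_subset_of_nonneg inter_subset_right fun i hi _ ↦ hs i hi

end Finset

theorem winner_maximizes_welfare_general {N : Type*}
    (v : Finset N → ℝ) (c p : N → ℝ) (W : Finset N)
    (hW : ∀ Q : Finset N, v Q - ∑ i ∈ Q, p i ≤ v W - ∑ i ∈ W, p i)
    (hwin : ∀ i ∈ W, c i ≤ p i)
    (hlose : ∀ i, i ∉ W → p i ≤ c i) :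
    ∀ Q : Finset N, v Q - ∑ i ∈ Q, c i ≤ v W - ∑ i ∈ W, c i := by
  intro Q
  have hmargin : ∑ i ∈ Q, (p i - c i) ≤ ∑ i ∈ W, (p i - c i) :=
    Finset.sum_le_sum_of_nonneg_of_nonpos_compl (fun i hi ↦ sub_nonneg.2 (hwin i hi))
      (fun i hi ↦ sub_nonpos.2 (hlose i hi)) Q
  rw [Finset.sum_sub_distrib, Finset.sum_sub_distrib] at hmargin
  linarith [hW Q]

/-- Key structural fact behind the efficiency of BAFO auctions: if `W` maximizes
the buyer's utility at prices `p` with `p_i ≥ c_i` for winners and `p_i ≤ c_i`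
for losers, then `W` maximizes social welfare at true costs. -/
theorem winner_maximizes_welfare {N : Type*} [Fintype N] [DecidableEq N]
    (v : Finset N → ℝ) (c p : N → ℝ) (W : Finset N)
    (hW : ∀ Q : Finset N, v Q - ∑ i ∈ Q, p i ≤ v W - ∑ i ∈ W, p i)
    (hwin : ∀ i ∈ W, c i ≤ p i)
    (hlose : ∀ i, i ∉ W → p i ≤ c i) :
    ∀ Q : Finset N, v Q - ∑ i ∈ Q, c i ≤ v W - ∑ i ∈ W, c i :=
  winner_maximizes_welfare_general v c p W hW hwin hlose
end
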